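/- arXiv:2108.06371 — 3 statements merged into one kernel-verified Lean document; each statement's English description precedes it below -/
import Mathlib

section
/- Let B ∈ {0,1}^{m×n} be a 0-1 matrix with all row sums at most μ and all column sums at most μ, for a positive integer μ, and let S ∈ ℝ_{≥0}^{m×n} be a nonnegative weight matrix. Then there exists a 0-1 matrix A with A ≤ B entrywise, all row sums of A at most 1, all column sums of A at most 1, and Σ_{i,j} A_{ij}S_{ij} ≥ (1/μ)·Σ_{i,j} B_{ij}S_{ij}. -/
/-!
Pad the doubly substochastic matrix `X = B / μ` to the doubly stochastic matrix
`[[I - diag (row sums of X), X], [Xᵀ, I - diag (column sums of X)]]` indexed by `m ⊕ n`.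
By Birkhoff's theorem it is a convex combination of permutation matrices, so for the linear
functional pairing the `X` block with `B ⊙ S` some permutation matrix scores at least as much. Its
`m × n` block is a partial matching, and masking it with the 0-1 matrix `B`
keeps its weight, because `B ⊙ B = B`.
-/

open Finset Matrix

namespace PEquiv

variable {R m n : Type*} [DecidableEq n]

section ZeroOne

variable [Zero R] [One R]

theorem toMatrix_apply_eq_zero_or_eq_one (f : m ≃. n) (i : m) (j : n) :
    f.toMatrix i j = (0 : R) ∨ f.toMatrix i j = (1 : R) := by
  rw [toMatrix_apply]
  split_ifs
  exacts [Or.inr rfl, Or.inl rfl]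

variable [Preorder R] [ZeroLEOneClass R]

theorem toMatrix_apply_nonneg (f : m ≃. n) (i : m) (j : n) : 0 ≤ (f.toMatrix i j : R) := by
  rw [toMatrix_apply]
  split_ifs <;> simp

theorem toMatrix_apply_le_one (f : m ≃. n) (i : m) (j : n) : (f.toMatrix i j : R) ≤ 1 := by
  rw [toMatrix_apply]
  split_ifs <;> simp

end ZeroOne

variable [AddCommMonoidWithOne R] [Preorder R] [ZeroLEOneClass R]

theorem sum_toMatrix_row_le_one [Fintype n] (f : m ≃. n) (i : m) :
    ∑ j, (f.toMatrix i j : R) ≤ 1 := by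
  cases h : f i <;> simp [toMatrix_apply, h]

theorem sum_toMatrix_col_le_one [Fintype m] [DecidableEq m] (f : m ≃. n) (j : n) :
    ∑ i, (f.toMatrix i j : R) ≤ 1 := by
  have := f.symm.sum_toMatrix_row_le_one (R := R) j
  rwa [toMatrix_symm] at this

end PEquiv

namespace Equiv.Perm

variable {m n : Type*}

def inlInrPEquiv (σ : Perm (m ⊕ n)) : m ≃. n where
  toFun i := (σ (.inl i)).getRight?
  invFun j := (σ.symm (.inr j)).getLeft?
  inv i j := by
    simp only [Sum.getLeft?_eq_some_iff, Sum.getRight?_eq_some_iff]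
    exact σ.symm_apply_eq.trans eq_comm

theorem toMatrix_inlInrPEquiv {R : Type*} [Zero R] [One R] [DecidableEq m] [DecidableEq n]
    (σ : Perm (m ⊕ n)) :
    (σ.inlInrPEquiv.toMatrix : Matrix m n R) = (σ.permMatrix R).toBlocks₁₂ := by
  ext i j
  simp [inlInrPEquiv, PEquiv.toMatrix_apply, toBlocks₁₂, Equiv.toPEquiv_apply]

end Equiv.Perm

section DoublyStochastic

variable {R : Type*} [Field R] [LinearOrder R] [IsStrictOrderedRing R]
  {m n : Type*} [Fintype m] [Fintype n] [DecidableEq m] [DecidableEq n]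

theorem exists_perm_le_of_mem_doublyStochastic {M : Matrix n n R}
    (hM : M ∈ doublyStochastic R n) (ℓ : Matrix n n R →ₗ[R] R) :
    ∃ σ : Equiv.Perm n, ℓ M ≤ ℓ (σ.permMatrix R) := by
  rw [← SetLike.mem_coe, doublyStochastic_eq_convexHull_permMatrix] at hM
  obtain ⟨_, ⟨σ, rfl⟩, hσ⟩ :=
    (ℓ.convexOn convex_univ).exists_ge_of_mem_convexHull (Set.subset_univ _) hM
  exact ⟨σ, hσ⟩

def doublyStochasticDilation (X : Matrix m n R) : Matrix (m ⊕ n) (m ⊕ n) R :=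
  fromBlocks (diagonal fun i => 1 - ∑ j, X i j) X Xᵀ (diagonal fun j => 1 - ∑ i, X i j)

theorem doublyStochasticDilation_mem_doublyStochastic {X : Matrix m n R}
    (hX : ∀ i j, 0 ≤ X i j) (hrow : ∀ i, ∑ j, X i j ≤ 1) (hcol : ∀ j, ∑ i, X i j ≤ 1) :
    doublyStochasticDilation X ∈ doublyStochastic R (m ⊕ n) := by
  refine mem_doublyStochastic_iff_sum.2 ⟨?_, ?_, ?_⟩
  · rintro (i | i) (j | j) <;>
      simp [doublyStochasticDilation, diagonal_apply, hX] <;> split_ifs <;> simp [hrow, hcol]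
  · rintro (i | j) <;> simp [doublyStochasticDilation, diagonal_apply]
  · rintro (i | j) <;> simp [doublyStochasticDilation, diagonal_apply]

theorem exists_pEquiv_le_of_doublySubstochastic {X : Matrix m n R}
    (hX : ∀ i j, 0 ≤ X i j) (hrow : ∀ i, ∑ j, X i j ≤ 1) (hcol : ∀ j, ∑ i, X i j ≤ 1)
    (W : Matrix m n R) :
    ∃ f : m ≃. n, ∑ i, ∑ j, X i j * W i j ≤ ∑ i, ∑ j, f.toMatrix i j * W i j := by
  let ℓ : Matrix (m ⊕ n) (m ⊕ n) R →ₗ[R] R :=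
    ∑ i, ∑ j, W i j • entryLinearMap R R (Sum.inl i) (Sum.inr j)
  have hℓ (Y : Matrix (m ⊕ n) (m ⊕ n) R) : ℓ Y = ∑ i, ∑ j, Y.toBlocks₁₂ i j * W i j := by
    simp [ℓ, LinearMap.sum_apply, toBlocks₁₂, mul_comm]
  obtain ⟨σ, hσ⟩ := exists_perm_le_of_mem_doublyStochastic
    (doublyStochasticDilation_mem_doublyStochastic hX hrow hcol) ℓ
  refine ⟨σ.inlInrPEquiv, ?_⟩
  rwa [hℓ, hℓ, doublyStochasticDilation, toBlocks_fromBlocks₁₂,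
    ← Equiv.Perm.toMatrix_inlInrPEquiv] at hσ

end DoublyStochastic

theorem exists_partial_matching_of_bounded_degree_general (m n : ℕ) (μ : ℕ)
    (B : Fin m → Fin n → ℝ) (hB01 : ∀ i j, B i j = 0 ∨ B i j = 1)
    (hBrow : ∀ i, ∑ j, B i j ≤ μ) (hBcol : ∀ j, ∑ i, B i j ≤ μ)
    (S : Fin m → Fin n → ℝ) :
    ∃ A : Fin m → Fin n → ℝ, (∀ i j, A i j = 0 ∨ A i j = 1) ∧
      (∀ i j, A i j ≤ B i j) ∧
      (∀ i, ∑ j, A i j ≤ 1) ∧ (∀ j, ∑ i, A i j ≤ 1) ∧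
      (1 / (μ : ℝ)) * ∑ i, ∑ j, B i j * S i j ≤ ∑ i, ∑ j, A i j * S i j := by
  have hB0 (i j) : 0 ≤ B i j := by rcases hB01 i j with h | h <;> simp [h]
  have hB1 (i j) : B i j ≤ 1 := by rcases hB01 i j with h | h <;> simp [h]
  have hBB (i j) : B i j * B i j = B i j := by rcases hB01 i j with h | h <;> simp [h]
  obtain ⟨f, hf⟩ := exists_pEquiv_le_of_doublySubstochastic (X := fun i j => B i j / μ)
    (fun i j => div_nonneg (hB0 i j) μ.cast_nonneg)
    (fun i => by rw [← sum_div]; exact div_le_one_of_le₀ (hBrow i) μ.cast_nonneg)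
    (fun j => by rw [← sum_div]; exact div_le_one_of_le₀ (hBcol j) μ.cast_nonneg)
    (fun i j => B i j * S i j)
  refine ⟨fun i j => f.toMatrix i j * B i j, fun i j => ?_,
    fun i j => mul_le_of_le_one_left (hB0 i j) (f.toMatrix_apply_le_one i j), fun i => ?_,
    fun j => ?_, ?_⟩
  · rcases f.toMatrix_apply_eq_zero_or_eq_one (R := ℝ) i j with h | h <;>
      simp only [h, zero_mul, one_mul, hB01 i j, true_or]
  · refine (sum_le_sum fun j _ => ?_).trans (f.sum_toMatrix_row_le_one i)
    exact mul_le_of_le_one_right (f.toMatrix_apply_nonneg i j) (hB1 i j)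
  · refine (sum_le_sum fun i _ => ?_).trans (f.sum_toMatrix_col_le_one j)
    exact mul_le_of_le_one_right (f.toMatrix_apply_nonneg i j) (hB1 i j)
  · calc 1 / (μ : ℝ) * ∑ i, ∑ j, B i j * S i j
        = ∑ i, ∑ j, B i j / μ * (B i j * S i j) := by
          simp only [mul_sum]
          exact sum_congr rfl fun i _ => sum_congr rfl fun j _ => by
            linear_combination (-(S i j / μ)) * hBB i j
      _ ≤ ∑ i, ∑ j, f.toMatrix i j * (B i j * S i j) := hf
      _ = ∑ i, ∑ j, f.toMatrix i j * B i j * S i j := by simp only [mul_assoc]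

/-- From a 0-1 matrix `B` with row and column sums at most `μ` and a nonnegative
weight matrix `S`, one can extract a 0-1 submatrix `A` with row and column sums at
most 1 capturing at least a `1/μ` fraction of the weight. -/
theorem exists_partial_matching_of_bounded_degree (m n : ℕ) (μ : ℕ) (hμ : 0 < μ)
    (B : Fin m → Fin n → ℝ) (hB01 : ∀ i j, B i j = 0 ∨ B i j = 1)
    (hBrow : ∀ i, ∑ j, B i j ≤ μ) (hBcol : ∀ j, ∑ i, B i j ≤ μ)
    (S : Fin m → Fin n → ℝ) (hS : ∀ i j, 0 ≤ S i j) :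
    ∃ A : Fin m → Fin n → ℝ, (∀ i j, A i j = 0 ∨ A i j = 1) ∧
      (∀ i j, A i j ≤ B i j) ∧
      (∀ i, ∑ j, A i j ≤ 1) ∧ (∀ j, ∑ i, A i j ≤ 1) ∧
      (1 / (μ : ℝ)) * ∑ i, ∑ j, B i j * S i j ≤ ∑ i, ∑ j, A i j * S i j :=
  exists_partial_matching_of_bounded_degree_general m n μ B hB01 hBrow hBcol S
end

section
/- Any real matrix D with all row sums at most 1, all column sums at most 1, and all entries in [0,1] can be written as a convex combination of 0-1 matrices each having all row sums at most 1 and all column sums at most 1 (i.e., partial permutation matrices). -/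
open Finset

/-- Generalized Birkhoff–von Neumann theorem: every doubly substochastic matrix
with entries in `[0,1]` is a convex combination of partial permutation matrices
(0-1 matrices with row and column sums at most 1). -/
theorem doubly_substochastic_convex_combination (m n : ℕ)
    (D : Fin m → Fin n → ℝ)
    (hD0 : ∀ i j, 0 ≤ D i j) (hD1 : ∀ i j, D i j ≤ 1)
    (hrow : ∀ i, ∑ j, D i j ≤ 1) (hcol : ∀ j, ∑ i, D i j ≤ 1) :
    ∃ (t : ℕ) (w : Fin t → ℝ) (P : Fin t → Fin m → Fin n → ℝ),
      (∀ s, 0 ≤ w s) ∧ (∑ s, w s = 1) ∧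
      (∀ s i j, P s i j = 0 ∨ P s i j = 1) ∧
      (∀ s i, ∑ j, P s i j ≤ 1) ∧ (∀ s j, ∑ i, P s i j ≤ 1) ∧
      (∀ i j, D i j = ∑ s, w s * P s i j) := by
  classical
  -- Embed D into an (m+n)×(m+n) doubly stochastic matrix
  set α := Fin m ⊕ Fin n
  set M : Matrix α α ℝ := fun a b =>
    match a, b with
    | Sum.inl i, Sum.inl i' => if i = i' then 1 - ∑ j, D i j else 0
    | Sum.inl i, Sum.inr j => D i j
    | Sum.inr j, Sum.inl i => D i j
    | Sum.inr j, Sum.inr j' => if j = j' then 1 - ∑ i, D i j else 0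
    with hMdef
  have hM : M ∈ doublyStochastic ℝ α := by
    rw [mem_doublyStochastic_iff_sum]
    refine ⟨?_, ?_, ?_⟩
    · rintro (i | j) (i' | j')
      · show (0:ℝ) ≤ if i = i' then 1 - ∑ j, D i j else 0
        split
        · linarith [hrow i]
        · exact le_rfl
      · exact hD0 i j'
      · exact hD0 i' j
      · show (0:ℝ) ≤ if j = j' then 1 - ∑ i, D i j else 0
        split
        · linarith [hcol j]
        · exact le_rfl
    · rintro (i | j)
      · have : ∑ b : α, M (Sum.inl i) b =
            (∑ i' : Fin m, if i = i' then 1 - ∑ j, D i j else 0) + ∑ j, D i j := by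
          rw [Fintype.sum_sum_type]
        rw [this, Finset.sum_ite_eq (Finset.univ) i (fun _ => 1 - ∑ j, D i j)]
        simp
      · have : ∑ b : α, M (Sum.inr j) b =
            (∑ i : Fin m, D i j) + ∑ j' : Fin n, if j = j' then 1 - ∑ i, D i j else 0 := by
          rw [Fintype.sum_sum_type]
        rw [this, Finset.sum_ite_eq (Finset.univ) j (fun _ => 1 - ∑ i, D i j)]
        simp
    · rintro (i | j)
      · have : ∑ b : α, M b (Sum.inl i) =
            (∑ i' : Fin m, if i' = i then 1 - ∑ j, D i' j else 0) + ∑ j, D i j := by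
          rw [Fintype.sum_sum_type]
        rw [this, Finset.sum_ite_eq' (Finset.univ) i (fun i' => 1 - ∑ j, D i' j)]
        simp
      · have : ∑ b : α, M b (Sum.inr j) =
            (∑ i : Fin m, D i j) + ∑ j' : Fin n, if j' = j then 1 - ∑ i, D i j' else 0 := by
          rw [Fintype.sum_sum_type]
        rw [this, Finset.sum_ite_eq' (Finset.univ) j (fun j' => 1 - ∑ i, D i j')]
        simp
  obtain ⟨w, hw0, hw1, hwM⟩ := exists_eq_sum_perm_of_mem_doublyStochastic hM
  set t := Fintype.card (Equiv.Perm α) with ht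
  let e : Fin t ≃ Equiv.Perm α := (Fintype.equivFin (Equiv.Perm α)).symm
  refine ⟨t, fun s => w (e s), fun s i j => (e s).permMatrix ℝ (Sum.inl i) (Sum.inr j),
    fun s => hw0 _, ?_, ?_, ?_, ?_, ?_⟩
  · rw [Fintype.sum_equiv e _ w (fun s => rfl)]; exact hw1
  · intro s i j
    simp only [Equiv.Perm.permMatrix, PEquiv.toMatrix_apply]
    split <;> simp
  · intro s i
    have h1 : ∑ b : α, (e s).permMatrix ℝ (Sum.inl i) b = 1 :=
      sum_row_of_mem_doublyStochastic permMatrix_mem_doublyStochastic _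
    rw [Fintype.sum_sum_type] at h1
    have h2 : (0:ℝ) ≤ ∑ i', (e s).permMatrix ℝ (Sum.inl i) (Sum.inl i') := by
      apply Finset.sum_nonneg
      intro i' _
      exact nonneg_of_mem_doublyStochastic permMatrix_mem_doublyStochastic
    linarith
  · intro s j
    have h1 : ∑ a : α, (e s).permMatrix ℝ a (Sum.inr j) = 1 :=
      sum_col_of_mem_doublyStochastic permMatrix_mem_doublyStochastic _
    rw [Fintype.sum_sum_type] at h1
    have h2 : (0:ℝ) ≤ ∑ j', (e s).permMatrix ℝ (Sum.inr j') (Sum.inr j) := by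
      apply Finset.sum_nonneg
      intro j' _
      exact nonneg_of_mem_doublyStochastic permMatrix_mem_doublyStochastic
    linarith
  · intro i j
    have : D i j = M (Sum.inl i) (Sum.inr j) := rfl
    have h2 : (∑ σ : Equiv.Perm α, w σ • σ.permMatrix ℝ) (Sum.inl i) (Sum.inr j)
        = ∑ σ : Equiv.Perm α, w σ * σ.permMatrix ℝ (Sum.inl i) (Sum.inr j) := by
      rw [Matrix.sum_apply]
      simp [Matrix.smul_apply]
    rw [this, ← hwM, h2]
    exact (Fintype.sum_equiv e _ _ fun s => rfl).symm
end

section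
/- Let X be a hypergeometric random variable Hyp(N, K, M) counting successes when drawing M items without replacement from a population of N items containing K successes. Then for all t > 0, P[X ≥ KM/N + t·M] ≤ exp(−2t²M) and P[X ≤ KM/N − t·M] ≤ exp(−2t²M). -/
/-!
The factorial moments of `X ~ Hyp(K + L, K, M)` are dominated by those of `Bin(M, p)` with
`p = K / (K + L)`:
`E[C(X, j)] = C(K, j) C(K + L - j, M - j) / C(K + L, M) ≤ C(M, j) p ^ j`.
Expanding `(1 + c) ^ X = ∑ C(X, j) c ^ j`, the moment generating function of `X` at `h ≥ 0` is
therefore at most `(1 - p + p e ^ h) ^ M`, and Hoeffding's lemma for a Bernoulli variable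
followed by the Chernoff bound at `h = 4 t` gives the upper tail. The lower tail is the upper
tail of `M - X ~ Hyp(K + L, L, M)`.
-/

open Finset Real ProbabilityTheory MeasureTheory

theorem Nat.descFactorial_mul_pow_le {K N : ℕ} (hK : K ≤ N) (j : ℕ) :
    K.descFactorial j * N ^ j ≤ N.descFactorial j * K ^ j := by
  induction j with
  | zero => simp
  | succ j ih =>
    have step : (K - j) * N ≤ (N - j) * K := by
      rcases le_or_gt j K with hj | hj
      · zify [hj, hj.trans hK]; nlinarith
      · simp [Nat.sub_eq_zero_of_le hj.le]
    rw [Nat.descFactorial_succ, Nat.descFactorial_succ, pow_succ, pow_succ]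
    calc (K - j) * K.descFactorial j * (N ^ j * N)
        = (K - j) * N * (K.descFactorial j * N ^ j) := by ring
      _ ≤ (N - j) * K * (N.descFactorial j * K ^ j) := Nat.mul_le_mul step ih
      _ = (N - j) * N.descFactorial j * (K ^ j * K) := by ring

theorem Nat.choose_mul_pow_le {K N : ℕ} (hK : K ≤ N) (j : ℕ) :
    K.choose j * N ^ j ≤ N.choose j * K ^ j := by
  have h := Nat.descFactorial_mul_pow_le hK j
  rw [Nat.descFactorial_eq_factorial_mul_choose, Nat.descFactorial_eq_factorial_mul_choose,
    mul_assoc, mul_assoc] at h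
  exact Nat.le_of_mul_le_mul_left h j.factorial_pos

theorem Nat.sum_choose_mul_choose_mul_choose (K L M : ℕ) {j : ℕ} (hj : j ≤ M) :
    ∑ x ∈ range (M + 1), x.choose j * (K.choose x * L.choose (M - x)) =
      K.choose j * (K - j + L).choose (M - j) := by
  rw [show M + 1 = j + (M - j + 1) by omega, sum_range_add,
    sum_eq_zero fun x hx => by rw [Nat.choose_eq_zero_of_lt (mem_range.1 hx), zero_mul],
    zero_add, Nat.add_choose_eq, Finset.Nat.sum_antidiagonal_eq_sum_range_succ_mk, mul_sum]
  refine sum_congr rfl fun i _ => ?_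
  rw [← mul_assoc, mul_comm (Nat.choose _ j), Nat.choose_mul (Nat.le_add_right j i),
    Nat.add_sub_cancel_left, show M - (j + i) = M - j - i by omega, mul_assoc]

theorem one_sub_add_mul_exp_le {p : ℝ} (hp0 : 0 ≤ p) (hp1 : p ≤ 1) (h : ℝ) :
    1 - p + p * exp h ≤ exp (p * h + h ^ 2 / 8) := by
  set μ := bernoulliMeasure (1 : ℝ) 0 ⟨p, hp0, hp1⟩
  have hmem : ∀ᵐ ω ∂μ, ω ∈ Set.Icc (0 : ℝ) 1 := by
    change μ (Set.Icc 0 1)ᶜ = 0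
    rw [bernoulliMeasure_apply_of_notMem_of_notMem] <;> simp [measurableSet_Icc.compl]
  have hmean : μ[id] = p := by simp [μ, integral_bernoulliMeasure]
  have hmgf := (hasSubgaussianMGF_of_mem_Icc aemeasurable_id hmem).mgf_le h
  rw [mgf, hmean, integral_bernoulliMeasure] at hmgf
  norm_num at hmgf
  have e₁ : exp (p * h) * exp (h * (1 - p)) = exp h := by rw [← exp_add]; ring_nf
  have e₀ : exp (p * h) * exp (-(h * p)) = 1 := by rw [← exp_add]; ring_nf; exact exp_zero
  calc 1 - p + p * exp h
      = exp (p * h) * (p * exp (h * (1 - p)) + (1 - p) * exp (-(h * p))) := by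
        linear_combination -p * e₁ - (1 - p) * e₀
    _ ≤ exp (p * h) * exp (1 / 4 * h ^ 2 / 2) := by gcongr
    _ = exp (p * h + h ^ 2 / 8) := by rw [← exp_add]; ring_nf

theorem sum_filter_le_exp_mul_sum {ι : Type*} (s : Finset ι) {w f : ι → ℝ}
    (hw : ∀ i ∈ s, 0 ≤ w i) (a : ℝ) {h : ℝ} (hh : 0 ≤ h) :
    ∑ i ∈ s with a ≤ f i, w i ≤ exp (-(h * a)) * ∑ i ∈ s, w i * exp (h * f i) := by
  rw [mul_sum]
  refine (sum_le_sum fun i hi => ?_).trans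
    (sum_le_sum_of_subset_of_nonneg (filter_subset _ s) fun i hi _ => ?_)
  · rw [mem_filter] at hi
    have : 1 ≤ exp (-(h * a)) * exp (h * f i) := by
      rw [← exp_add, one_le_exp_iff]; nlinarith [hi.2]
    nlinarith [hw i hi.1]
  · have := hw i hi; positivity

theorem one_add_pow_eq_sum_range_choose {R : Type*} [CommSemiring R] (c : R) {x n : ℕ}
    (hx : x ≤ n) : (1 + c) ^ x = ∑ j ∈ range (n + 1), (x.choose j : R) * c ^ j := by
  rw [add_comm, add_pow]
  refine sum_subset (range_subset_range.2 (by omega)) (fun j _ hj => ?_) |>.trans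
    (sum_congr rfl fun j _ => by rw [one_pow, mul_one, mul_comm])
  rw [Nat.choose_eq_zero_of_lt (by simpa using hj), Nat.cast_zero, mul_zero]

/-- `P[X = x]` for `X ~ Hyp(K + L, K, M)`: the population is given by its `K` successes and
`L = N - K` failures, which avoids truncated subtraction. -/
noncomputable def hypergeometricProb (K L M x : ℕ) : ℝ :=
  (K.choose x * L.choose (M - x) : ℝ) / ((K + L).choose M : ℝ)

theorem sum_choose_mul_hypergeometricProb_le {K L M j : ℕ} (hM : M ≤ K + L) (hj : j ≤ M) :
    ∑ x ∈ range (M + 1), (x.choose j : ℝ) * hypergeometricProb K L M x ≤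
      M.choose j * ((K : ℝ) / (K + L)) ^ j := by
  have hC : (0 : ℝ) < (K + L).choose M := by exact_mod_cast Nat.choose_pos hM
  have hpow : (0 : ℝ) < ((K : ℝ) + L) ^ j := by
    rcases Nat.eq_zero_or_pos (K + L) with h | h
    · simp [show j = 0 by omega]
    · exact_mod_cast pow_pos h j
  have hnat : K.choose j * (K - j + L).choose (M - j) * (K + L) ^ j ≤
      M.choose j * K ^ j * (K + L).choose M := by
    rcases le_or_gt j K with hjK | hjK
    · have hcm := Nat.choose_mul (n := K + L) hj
      rw [show K - j + L = K + L - j by omega]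
      calc K.choose j * (K + L - j).choose (M - j) * (K + L) ^ j
          = K.choose j * (K + L) ^ j * (K + L - j).choose (M - j) := by ring
        _ ≤ (K + L).choose j * K ^ j * (K + L - j).choose (M - j) :=
          Nat.mul_le_mul_right _ (Nat.choose_mul_pow_le (Nat.le_add_right K L) j)
        _ = M.choose j * K ^ j * (K + L).choose M := by rw [mul_right_comm, ← hcm]; ring
    · simp [Nat.choose_eq_zero_of_lt hjK]
  have hsum := congrArg (Nat.cast (R := ℝ)) (Nat.sum_choose_mul_choose_mul_choose K L M hj)
  push_cast at hsum
  simp only [hypergeometricProb, mul_div_assoc', ← sum_div, hsum]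
  rw [div_le_iff₀ hC, div_pow, mul_div_assoc', div_mul_eq_mul_div, le_div_iff₀ hpow]
  exact_mod_cast hnat

theorem sum_hypergeometricProb_mul_pow_le {K L M : ℕ} (hM : M ≤ K + L) {c : ℝ} (hc : 0 ≤ c) :
    ∑ x ∈ range (M + 1), hypergeometricProb K L M x * (1 + c) ^ x ≤
      (1 + (K : ℝ) / (K + L) * c) ^ M := by
  calc ∑ x ∈ range (M + 1), hypergeometricProb K L M x * (1 + c) ^ x
      = ∑ j ∈ range (M + 1), c ^ j *
          ∑ x ∈ range (M + 1), (x.choose j : ℝ) * hypergeometricProb K L M x := by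
        simp_rw [mul_sum]
        rw [sum_comm]
        refine sum_congr rfl fun x hx => ?_
        rw [one_add_pow_eq_sum_range_choose c (Nat.lt_succ_iff.1 (mem_range.1 hx)), mul_sum]
        exact sum_congr rfl fun j _ => by ring
    _ ≤ ∑ j ∈ range (M + 1), c ^ j * (M.choose j * ((K : ℝ) / (K + L)) ^ j) := by
        gcongr with j hj
        exact sum_choose_mul_hypergeometricProb_le hM (Nat.lt_succ_iff.1 (mem_range.1 hj))
    _ = (1 + (K : ℝ) / (K + L) * c) ^ M := by
        rw [add_comm (1 : ℝ), add_pow]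
        exact sum_congr rfl fun j _ => by ring

theorem hypergeometric_upper_tail {K L M : ℕ} (hM : M ≤ K + L) {t : ℝ} (ht : 0 ≤ t) :
    ∑ x ∈ range (M + 1) with (K : ℝ) * M / (K + L) + t * M ≤ ((x : ℕ) : ℝ),
      hypergeometricProb K L M x ≤ exp (-2 * t ^ 2 * M) := by
  set p : ℝ := K / (K + L)
  have hp0 : 0 ≤ p := by positivity
  have hp1 : p ≤ 1 := div_le_one_of_le₀ (le_add_of_nonneg_right L.cast_nonneg) (by positivity)
  have hmgf : ∑ x ∈ range (M + 1), hypergeometricProb K L M x * exp (4 * t * x) ≤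
      exp ((4 * t * p + 2 * t ^ 2) * M) := by
    have hc : 0 ≤ exp (4 * t) - 1 := sub_nonneg.2 (one_le_exp (by positivity))
    calc _ = ∑ x ∈ range (M + 1),
          hypergeometricProb K L M x * (1 + (exp (4 * t) - 1)) ^ x := by
          simp_rw [add_sub_cancel, ← exp_nat_mul, mul_comm (4 * t)]
      _ ≤ (1 + p * (exp (4 * t) - 1)) ^ M := sum_hypergeometricProb_mul_pow_le hM hc
      _ ≤ exp (4 * t * p + 2 * t ^ 2) ^ M := by
          gcongr
          rw [show 4 * t * p + 2 * t ^ 2 = p * (4 * t) + (4 * t) ^ 2 / 8 by ring]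
          linarith [one_sub_add_mul_exp_le hp0 hp1 (4 * t)]
      _ = exp ((4 * t * p + 2 * t ^ 2) * M) := by rw [← exp_nat_mul, mul_comm]
  calc _ ≤ exp (-(4 * t * (p * M + t * M))) *
        ∑ x ∈ range (M + 1), hypergeometricProb K L M x * exp (4 * t * x) := by
        rw [← mul_div_right_comm]
        refine sum_filter_le_exp_mul_sum _ (fun x _ => ?_) _ (by positivity)
        unfold hypergeometricProb; positivity
    _ ≤ exp (-(4 * t * (p * M + t * M))) * exp ((4 * t * p + 2 * t ^ 2) * M) := by gcongr
    _ = exp (-2 * t ^ 2 * M) := by rw [← exp_add]; ring_nf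

theorem hypergeometricProb_comm (K L M : ℕ) {x : ℕ} (hx : x ≤ M) :
    hypergeometricProb K L M x = hypergeometricProb L K M (M - x) := by
  rw [hypergeometricProb, hypergeometricProb, Nat.sub_sub_self hx, add_comm L, mul_comm]

theorem hypergeometric_lower_tail {K L M : ℕ} (hKL : 0 < K + L) (hM : M ≤ K + L) {t : ℝ}
    (ht : 0 ≤ t) :
    ∑ x ∈ range (M + 1) with ((x : ℕ) : ℝ) ≤ K * M / (K + L) - t * M,
      hypergeometricProb K L M x ≤ exp (-2 * t ^ 2 * M) := by
  refine le_of_eq_of_le ?_ (hypergeometric_upper_tail (add_comm K L ▸ hM) ht)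
  have hsplit : (K : ℝ) * M / (K + L) + L * M / (L + K) = M := by
    rw [add_comm (L : ℝ), ← add_div, ← add_mul, mul_div_cancel_left₀]
    exact_mod_cast hKL.ne'
  refine sum_nbij' (M - ·) (M - ·) (fun x hx => ?_) (fun y hy => ?_) (fun x hx => ?_)
    (fun y hy => ?_) (fun x hx => ?_)
  · rw [mem_filter, mem_range] at hx ⊢
    refine ⟨by omega, ?_⟩
    rw [Nat.cast_sub (by omega)]
    linarith [hx.2]
  · rw [mem_filter, mem_range] at hy ⊢
    refine ⟨by omega, ?_⟩
    rw [Nat.cast_sub (by omega)]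
    linarith [hy.2]
  · have := mem_range.1 (mem_filter.1 hx).1; omega
  · have := mem_range.1 (mem_filter.1 hy).1; omega
  · exact hypergeometricProb_comm K L M (Nat.lt_succ_iff.1 (mem_range.1 (mem_filter.1 hx).1))

theorem hypergeometric_tail_bounds_general (N K M : ℕ) (hN : 0 < N) (hK : K ≤ N)
    (hM : M ≤ N) (t : ℝ) (ht : 0 < t) :
    (∑ x ∈ (Finset.range (M + 1)).filter
        (fun x : ℕ => (K : ℝ) * M / N + t * M ≤ (x : ℝ)),
        (K.choose x * (N - K).choose (M - x) : ℝ) / (N.choose M : ℝ)) ≤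
      Real.exp (-2 * t ^ 2 * M) ∧
    (∑ x ∈ (Finset.range (M + 1)).filter
        (fun x : ℕ => (x : ℝ) ≤ (K : ℝ) * M / N - t * M),
        (K.choose x * (N - K).choose (M - x) : ℝ) / (N.choose M : ℝ)) ≤
      Real.exp (-2 * t ^ 2 * M) := by
  obtain ⟨L, rfl⟩ := Nat.exists_eq_add_of_le hK
  simp only [Nat.add_sub_cancel_left, Nat.cast_add]
  exact ⟨hypergeometric_upper_tail hM ht.le, hypergeometric_lower_tail hN hM ht.le⟩

/-- Hoeffding tail bounds for the hypergeometric distribution `Hyp(N, K, M)`: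
for `t > 0`, the probability that the number of successes exceeds `KM/N + tM`
(resp. falls below `KM/N − tM`) is at most `exp(−2t²M)`. -/
theorem hypergeometric_tail_bounds (N K M : ℕ) (hN : 0 < N) (hK : K ≤ N)
    (hM : M ≤ N) (hMpos : 0 < M) (t : ℝ) (ht : 0 < t) :
    (∑ x ∈ (Finset.range (M + 1)).filter
        (fun x : ℕ => (K : ℝ) * M / N + t * M ≤ (x : ℝ)),
        (K.choose x * (N - K).choose (M - x) : ℝ) / (N.choose M : ℝ)) ≤
      Real.exp (-2 * t ^ 2 * M) ∧
    (∑ x ∈ (Finset.range (M + 1)).filter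
        (fun x : ℕ => (x : ℝ) ≤ (K : ℝ) * M / N - t * M),
        (K.choose x * (N - K).choose (M - x) : ℝ) / (N.choose M : ℝ)) ≤
      Real.exp (-2 * t ^ 2 * M) :=
  hypergeometric_tail_bounds_general N K M hN hK hM t ht
end
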